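/- Let G1 and G2 be disjoint finite connected simple graphs with positive edge weights, let x1 ≠ x2 be vertices of G1 and y1 ≠ y2 be vertices of G2, and let G be the graph obtained from their disjoint union by adding four edges: {x1,y1} with weight b1, {x2,y2} with weight b2, {x1,y2} with weight r1, and {x2,y1} with weight r2. Suppose b1 · b2 = r1 · r2. Then for any edge k = {r,s} with both endpoints in G1 such that G − k is connected, and any balanced injection vector P, the failure of k causes no flow change on any edge of G2: if F are the flows in G with injection P and F' the flows in G − k with the same injection P, then F'_{mn} = F_{mn} for every edge {m,n} of G2. -/

import Mathlib

/-!
Let `D` be the difference of the two potentials. Deleting `k` leaves the Laplacian rows at the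
vertices of `G2` untouched, so `D` is harmonic there. The vertex `y1` sees `D(x1), D(x2)` through
weights `b1, r2`, and `y2` through `r1, b2`; the balance `b1 b2 = r1 r2` is exactly what makes the
two weighted means coincide, say with value `d`. So on `G2`, `D` is harmonic for the network in
which `y1` and `y2` are grounded at potential `d` through positive conductances. Pairing this with
`D - d` makes the Dirichlet energy of `D` on `G2` plus nonnegative grounding terms vanish, hence
`D` is constant along each edge of `G2`.
-/

open scoped Classical

/-- The weighted Laplacian `L = B W Bᵀ` of `G`, written out entrywise. -/
noncomputable def wLap {V : Type*} [Fintype V] [DecidableEq V]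
    (G : SimpleGraph V) (w : Sym2 V → ℝ) : Matrix V V ℝ :=
  Matrix.of fun u v =>
    if u = v then ∑ x ∈ Finset.univ.filter (fun x => G.Adj u x), w s(u, x)
    else if G.Adj u v then -w s(u, v) else 0

open Matrix

section
variable {V : Type*} [Fintype V] [DecidableEq V]

lemma wLap_mulVec_apply (G : SimpleGraph V) (w : Sym2 V → ℝ) (f : V → ℝ) (v : V) :
    (wLap G w *ᵥ f) v = ∑ x, if G.Adj v x then w s(v, x) * (f v - f x) else 0 := by
  have hrow : ∀ u, wLap G w v u * f u =
      (if v = u then (∑ x ∈ Finset.univ.filter (G.Adj v), w s(v, x)) * f v else 0)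
        - if G.Adj v u then w s(v, u) * f u else 0 := by
    intro u
    by_cases h : v = u
    · subst h; simp [wLap]
    · by_cases hadj : G.Adj v u <;> simp [wLap, h, hadj]
  simp only [mulVec, dotProduct, hrow, Finset.sum_sub_distrib, Finset.sum_ite_eq,
    Finset.mem_univ, if_true, Finset.sum_mul, ← Finset.sum_filter, mul_sub]

lemma wLap_mulVec_sub_const (G : SimpleGraph V) (w : Sym2 V → ℝ) (f : V → ℝ) (d : ℝ) :
    wLap G w *ᵥ (f - fun _ => d) = wLap G w *ᵥ f := by
  ext v
  simp only [wLap_mulVec_apply, Pi.sub_apply, sub_sub_sub_cancel_right]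

lemma sum_mul_wLap_mulVec_self (G : SimpleGraph V) (w : Sym2 V → ℝ) (f : V → ℝ) :
    ∑ v, f v * (wLap G w *ᵥ f) v =
      (∑ v, ∑ x, if G.Adj v x then w s(v, x) * (f v - f x) ^ 2 else 0) / 2 := by
  have hswap : ∑ v, f v * (wLap G w *ᵥ f) v =
      ∑ v, ∑ x, if G.Adj v x then w s(v, x) * (f x * (f x - f v)) else 0 := by
    simp only [wLap_mulVec_apply, Finset.mul_sum]
    rw [Finset.sum_comm]
    refine Finset.sum_congr rfl fun x _ => Finset.sum_congr rfl fun v _ => ?_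
    rw [G.adj_comm, Sym2.eq_swap]
    split_ifs <;> ring
  rw [eq_div_iff two_ne_zero, mul_two]
  nth_rewrite 2 [hswap]
  simp only [wLap_mulVec_apply, Finset.mul_sum, ← Finset.sum_add_distrib]
  refine Finset.sum_congr rfl fun v _ => Finset.sum_congr rfl fun x _ => ?_
  split_ifs <;> ring

lemma eq_of_adj_of_grounded_harmonic {H : SimpleGraph V} {c : Sym2 V → ℝ}
    (hc : ∀ ⦃u v⦄, H.Adj u v → 0 < c s(u, v)) {κ f : V → ℝ} {d : ℝ} (hκ : ∀ v, 0 ≤ κ v)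
    (hf : ∀ v, (wLap H c *ᵥ f) v + κ v * (f v - d) = 0) {m n : V} (hmn : H.Adj m n) :
    f m = f n := by
  set g : V → ℝ := f - fun _ => d
  set term : V → V → ℝ := fun v x => if H.Adj v x then c s(v, x) * (g v - g x) ^ 2 else 0
  have hterm_nonneg : ∀ v x, 0 ≤ term v x := fun v x => by
    by_cases h : H.Adj v x
    · simpa [term, h] using mul_nonneg (hc h).le (sq_nonneg (g v - g x))
    · simp [term, h]
  have henergy : (∑ v, ∑ x, term v x) / 2 = -∑ v, κ v * g v ^ 2 := by
    rw [← sum_mul_wLap_mulVec_self, wLap_mulVec_sub_const, ← Finset.sum_neg_distrib]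
    refine Finset.sum_congr rfl fun v _ => ?_
    simp only [g, Pi.sub_apply]
    linear_combination (f v - d) * hf v
  have hzero : ∑ v, ∑ x, term v x = 0 := by
    have hκg : 0 ≤ ∑ v, κ v * g v ^ 2 :=
      Finset.sum_nonneg fun v _ => mul_nonneg (hκ v) (sq_nonneg _)
    have := Finset.sum_nonneg fun v (_ : v ∈ Finset.univ) =>
      Finset.sum_nonneg fun x (_ : x ∈ Finset.univ) => hterm_nonneg v x
    linarith
  have hmn_term : term m n = 0 :=
    (Finset.sum_eq_zero_iff_of_nonneg fun x _ => hterm_nonneg m x).mp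
      ((Finset.sum_eq_zero_iff_of_nonneg fun v _ =>
        Finset.sum_nonneg fun x _ => hterm_nonneg v x).mp hzero m (Finset.mem_univ m))
      n (Finset.mem_univ n)
  simpa only [term, if_pos hmn, mul_eq_zero, (hc hmn).ne', false_or, sq_eq_zero_iff,
    sub_eq_zero, g, Pi.sub_apply, sub_left_inj] using hmn_term

lemma wLap_deleteEdges_mulVec_apply_of_notMem (G : SimpleGraph V) (w : Sym2 V → ℝ)
    (f : V → ℝ) {e : Sym2 V} {v : V} (hv : v ∉ e) :
    (wLap (G.deleteEdges {e}) w *ᵥ f) v = (wLap G w *ᵥ f) v := by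
  simp only [wLap_mulVec_apply, SimpleGraph.deleteEdges_adj, Set.mem_singleton_iff]
  refine Finset.sum_congr rfl fun x _ => ?_
  have : s(v, x) ≠ e := fun h => hv (h ▸ Sym2.mem_mk_left v x)
  simp [this]

end

lemma balanced_mean_eq {b1 b2 r1 r2 : ℝ} (hbal : b1 * b2 = r1 * r2) (hbr : b1 + r2 ≠ 0)
    (hrb : r1 + b2 ≠ 0) (p q : ℝ) :
    (r1 * p + b2 * q) / (r1 + b2) = (b1 * p + r2 * q) / (b1 + r2) := by
  rw [div_eq_div_iff hrb hbr]
  linear_combination (q - p) * hbal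

section
variable {V1 V2 : Type*} [Fintype V1] [DecidableEq V1] [DecidableEq V2]

lemma wLap_mulVec_inr [Fintype V2] {G : SimpleGraph (V1 ⊕ V2)} {G2 : SimpleGraph V2}
    (hGrr : ∀ a b, G.Adj (.inr a) (.inr b) ↔ G2.Adj a b) (w : Sym2 (V1 ⊕ V2) → ℝ)
    (f : V1 ⊕ V2 → ℝ) (y : V2) :
    (wLap G w *ᵥ f) (.inr y) = (wLap G2 (fun e => w (e.map .inr)) *ᵥ (f ∘ .inr)) y +
      ∑ a, if G.Adj (.inr y) (.inl a) then w s(.inr y, .inl a) * (f (.inr y) - f (.inl a))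
        else 0 := by
  simp only [wLap_mulVec_apply, Fintype.sum_sum_type, hGrr, add_comm, Function.comp_apply,
    Sym2.map_mk]

variable {G : SimpleGraph (V1 ⊕ V2)} {x1 x2 : V1} {y1 y2 : V2}

lemma sum_inr_adj_inl_of_four_edges (hx : x1 ≠ x2) (hy : y1 ≠ y2)
    (hGlr : ∀ a b, G.Adj (.inl a) (.inr b) ↔
      ((a = x1 ∧ b = y1) ∨ (a = x2 ∧ b = y2) ∨ (a = x1 ∧ b = y2) ∨ (a = x2 ∧ b = y1)))
    (g : V1 → ℝ) (y : V2) :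
    ∑ a, (if G.Adj (.inr y) (.inl a) then g a else 0) =
      if y = y1 ∨ y = y2 then g x1 + g x2 else 0 := by
  rw [← Finset.sum_filter]
  split_ifs with hy12
  · have hnbr : Finset.univ.filter (fun a => G.Adj (.inr y) (.inl a)) = {x1, x2} := by
      ext a
      rcases hy12 with rfl | rfl <;> simp [G.adj_comm, hGlr, hy, hy.symm, or_comm]
    rw [hnbr, Finset.sum_pair hx]
  · refine Finset.sum_eq_zero fun a ha => absurd ha ?_
    simp only [Finset.mem_filter, G.adj_comm, hGlr]
    tauto

lemma sum_inr_adj_inl_eq_grounding (hx : x1 ≠ x2) (hy : y1 ≠ y2)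
    (hGlr : ∀ a b, G.Adj (.inl a) (.inr b) ↔
      ((a = x1 ∧ b = y1) ∨ (a = x2 ∧ b = y2) ∨ (a = x1 ∧ b = y2) ∨ (a = x2 ∧ b = y1)))
    {w : Sym2 (V1 ⊕ V2) → ℝ} {b1 b2 r1 r2 : ℝ}
    (hb1 : w s(.inl x1, .inr y1) = b1) (hb2 : w s(.inl x2, .inr y2) = b2)
    (hr1 : w s(.inl x1, .inr y2) = r1) (hr2 : w s(.inl x2, .inr y1) = r2)
    (hbal : b1 * b2 = r1 * r2) (hbr : b1 + r2 ≠ 0) (hrb : r1 + b2 ≠ 0)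
    (f : V1 ⊕ V2 → ℝ) (y : V2) :
    ∑ a, (if G.Adj (.inr y) (.inl a) then w s(.inr y, .inl a) * (f (.inr y) - f (.inl a))
      else 0) =
      (if y = y1 then b1 + r2 else if y = y2 then r1 + b2 else 0) *
        (f (.inr y) - (b1 * f (.inl x1) + r2 * f (.inl x2)) / (b1 + r2)) := by
  rw [sum_inr_adj_inl_of_four_edges hx hy hGlr, Sym2.eq_swap (a := (Sum.inr y : V1 ⊕ V2)),
    Sym2.eq_swap (a := (Sum.inr y : V1 ⊕ V2))]
  by_cases h1 : y = y1
  · subst h1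
    simp only [true_or, if_true, hb1, hr2]
    field_simp
    ring
  by_cases h2 : y = y2
  · subst h2
    simp only [h1, or_true, if_true, if_false, hr1, hb2]
    rw [← balanced_mean_eq hbal hbr hrb]
    field_simp
    ring
  · simp [h1, h2]

end

theorem balanced_four_edge_isolator_general
    {V1 V2 : Type*} [Fintype V1] [Fintype V2] [DecidableEq V1] [DecidableEq V2]
    (G2 : SimpleGraph V2)
    (x1 x2 : V1) (hx : x1 ≠ x2) (y1 y2 : V2) (hy : y1 ≠ y2)
    (G : SimpleGraph (V1 ⊕ V2))
    (hGrr : ∀ a b : V2, G.Adj (Sum.inr a) (Sum.inr b) ↔ G2.Adj a b)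
    (hGlr : ∀ (a : V1) (b : V2), G.Adj (Sum.inl a) (Sum.inr b) ↔
      ((a = x1 ∧ b = y1) ∨ (a = x2 ∧ b = y2) ∨ (a = x1 ∧ b = y2) ∨ (a = x2 ∧ b = y1)))
    (w : Sym2 (V1 ⊕ V2) → ℝ) (hw : ∀ e ∈ G.edgeSet, 0 < w e)
    (b1 b2 r1 r2 : ℝ)
    (hb1 : w s(Sum.inl x1, Sum.inr y1) = b1)
    (hb2 : w s(Sum.inl x2, Sum.inr y2) = b2)
    (hr1 : w s(Sum.inl x1, Sum.inr y2) = r1)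
    (hr2 : w s(Sum.inl x2, Sum.inr y1) = r2)
    (hbal : b1 * b2 = r1 * r2)
    (kr ks : V1)
    (P : V1 ⊕ V2 → ℝ)
    (Vp : V1 ⊕ V2 → ℝ) (hVp : Matrix.mulVec (wLap G w) Vp = P)
    (Vp' : V1 ⊕ V2 → ℝ)
    (hVp' : Matrix.mulVec (wLap (G.deleteEdges {s(Sum.inl kr, Sum.inl ks)}) w) Vp' = P) :
    ∀ m n : V2, G2.Adj m n →
      w s(Sum.inr m, Sum.inr n) * (Vp' (Sum.inr m) - Vp' (Sum.inr n)) =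
        w s(Sum.inr m, Sum.inr n) * (Vp (Sum.inr m) - Vp (Sum.inr n)) := by
  intro m n hmn
  have hpos : ∀ ⦃u v⦄, G.Adj u v → 0 < w s(u, v) := fun u v h => hw _ h
  have hbr : 0 < b1 + r2 := add_pos (hb1 ▸ hpos ((hGlr _ _).2 (by simp)))
    (hr2 ▸ hpos ((hGlr _ _).2 (by simp)))
  have hrb : 0 < r1 + b2 := add_pos (hr1 ▸ hpos ((hGlr _ _).2 (by simp)))
    (hb2 ▸ hpos ((hGlr _ _).2 (by simp)))
  set D := Vp' - Vp
  have hharm : ∀ y, (wLap G2 (fun e => w (e.map .inr)) *ᵥ (D ∘ .inr)) y +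
      (if y = y1 then b1 + r2 else if y = y2 then r1 + b2 else 0) *
        (D (.inr y) - (b1 * D (.inl x1) + r2 * D (.inl x2)) / (b1 + r2)) = 0 := by
    intro y
    have hrow : (wLap G w *ᵥ D) (.inr y) = 0 := by
      rw [mulVec_sub, Pi.sub_apply, ← wLap_deleteEdges_mulVec_apply_of_notMem G w Vp'
        (e := s(.inl kr, .inl ks)) (by simp), hVp, hVp', sub_self]
    rwa [wLap_mulVec_inr hGrr, sum_inr_adj_inl_eq_grounding hx hy hGlr hb1 hb2 hr1 hr2 hbal
      hbr.ne' hrb.ne'] at hrow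
  have hc : ∀ ⦃u v⦄, G2.Adj u v → 0 < w (s(u, v).map .inr) :=
    fun u v h => hpos ((hGrr u v).2 h)
  have hD := eq_of_adj_of_grounded_harmonic hc (fun y => by split_ifs <;> positivity) hharm hmn
  simp only [D, Function.comp_apply, Pi.sub_apply] at hD
  rw [show Vp' (.inr m) - Vp' (.inr n) = Vp (.inr m) - Vp (.inr n) by linarith]

/-- **A balanced four-edge connection is a network isolator.**  Let `G1`, `G2`
be disjoint finite connected simple graphs with positive edge weights, let
`x1 ≠ x2` be vertices of `G1` and `y1 ≠ y2` vertices of `G2`, and let `G` be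
obtained from their disjoint union by adding the four edges `{x1,y1}` (weight
`b1`), `{x2,y2}` (weight `b2`), `{x1,y2}` (weight `r1`) and `{x2,y1}` (weight
`r2`), with `b1 * b2 = r1 * r2`.  Then for any edge `k = {kr,ks}` inside `G1`
whose removal leaves `G` connected, and any balanced injection `P`, the
failure of `k` causes no flow change on any edge of `G2`. -/
theorem balanced_four_edge_isolator
    {V1 V2 : Type*} [Fintype V1] [Fintype V2] [DecidableEq V1] [DecidableEq V2]
    (G1 : SimpleGraph V1) (G2 : SimpleGraph V2)
    (hG1 : G1.Connected) (hG2 : G2.Connected)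
    (x1 x2 : V1) (hx : x1 ≠ x2) (y1 y2 : V2) (hy : y1 ≠ y2)
    (G : SimpleGraph (V1 ⊕ V2))
    (hGll : ∀ a b : V1, G.Adj (Sum.inl a) (Sum.inl b) ↔ G1.Adj a b)
    (hGrr : ∀ a b : V2, G.Adj (Sum.inr a) (Sum.inr b) ↔ G2.Adj a b)
    (hGlr : ∀ (a : V1) (b : V2), G.Adj (Sum.inl a) (Sum.inr b) ↔
      ((a = x1 ∧ b = y1) ∨ (a = x2 ∧ b = y2) ∨ (a = x1 ∧ b = y2) ∨ (a = x2 ∧ b = y1)))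
    (w : Sym2 (V1 ⊕ V2) → ℝ) (hw : ∀ e ∈ G.edgeSet, 0 < w e)
    (b1 b2 r1 r2 : ℝ)
    (hb1 : w s(Sum.inl x1, Sum.inr y1) = b1)
    (hb2 : w s(Sum.inl x2, Sum.inr y2) = b2)
    (hr1 : w s(Sum.inl x1, Sum.inr y2) = r1)
    (hr2 : w s(Sum.inl x2, Sum.inr y1) = r2)
    (hbal : b1 * b2 = r1 * r2)
    (kr ks : V1) (hk : G1.Adj kr ks)
    (hGk : (G.deleteEdges {s(Sum.inl kr, Sum.inl ks)}).Connected)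
    (P : V1 ⊕ V2 → ℝ) (hP : ∑ u, P u = 0)
    (Vp : V1 ⊕ V2 → ℝ) (hVp : Matrix.mulVec (wLap G w) Vp = P)
    (Vp' : V1 ⊕ V2 → ℝ)
    (hVp' : Matrix.mulVec (wLap (G.deleteEdges {s(Sum.inl kr, Sum.inl ks)}) w) Vp' = P) :
    ∀ m n : V2, G2.Adj m n →
      w s(Sum.inr m, Sum.inr n) * (Vp' (Sum.inr m) - Vp' (Sum.inr n)) =
        w s(Sum.inr m, Sum.inr n) * (Vp (Sum.inr m) - Vp (Sum.inr n)) :=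
  balanced_four_edge_isolator_general G2 x1 x2 hx y1 y2 hy G hGrr hGlr w hw b1 b2 r1 r2 hb1 hb2 hr1
    hr2 hbal kr ks P Vp hVp Vp' hVp'
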